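/- If X and Y are nonzero real Banach spaces, then t(X ⊕_∞ Y) = min{t(X), t(Y)}. -/

import Mathlib

/-- The thinness index `t(X)` of a normed space. -/
noncomputable def thinness (X : Type*) [NormedAddCommGroup X] : ℝ :=
  sInf {r : ℝ | 0 < r ∧ ∀ (n : ℕ) (x : Fin n → X), (∀ i, ‖x i‖ = 1) →
    ∀ ε : ℝ, 0 < ε → ∃ y : X, ‖y‖ = 1 ∧ ∀ i, ‖x i - y‖ < r + ε}

/-!
A radius `r` works for `X ⊕_∞ Y` exactly when it works for `X` or for `Y`, so the set whose
infimum defines `t(X ⊕_∞ Y)` is the union of the sets for `X` and `Y`.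
If `r` works for `X`, points of the sphere of `X ⊕_∞ Y` are approximated by `(u, 0)`, where `u`
approximates their first coordinates; this needs `r` to work for points of the unit *ball*,
which follows from `1 ≤ r` by writing `x = ‖x‖ • w` with `‖w‖ = 1`.
Conversely, if `r` fails for `X` and for `Y`, witnessed by families `xᵢ` and `yⱼ`, it fails for
the family `(xᵢ, b), (a, yⱼ)` with `‖a‖ = ‖b‖ = 1`: a unit vector `w` of the sum has a coordinate
of norm one, and that coordinate is far from some `xᵢ` or some `yⱼ`.
-/

open WithLp

section Bounds

variable {X : Type*} [NormedAddCommGroup X]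

def thinnessBounds (X : Type*) [NormedAddCommGroup X] : Set ℝ :=
  {r : ℝ | 0 < r ∧ ∀ (n : ℕ) (x : Fin n → X), (∀ i, ‖x i‖ = 1) →
    ∀ ε : ℝ, 0 < ε → ∃ y : X, ‖y‖ = 1 ∧ ∀ i, ‖x i - y‖ < r + ε}

theorem thinness_eq_sInf_thinnessBounds : thinness X = sInf (thinnessBounds X) :=
  rfl

theorem bddBelow_thinnessBounds : BddBelow (thinnessBounds X) :=
  ⟨0, fun _ hr => hr.1.le⟩

theorem notMem_thinnessBounds_iff {r : ℝ} (hr : 0 < r) :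
    r ∉ thinnessBounds X ↔ ∃ (n : ℕ) (x : Fin n → X), (∀ i, ‖x i‖ = 1) ∧
      ∃ ε > 0, ∀ y : X, ‖y‖ = 1 → ∃ i, r + ε ≤ ‖x i - y‖ := by
  simp [thinnessBounds, hr]

variable [NormedSpace ℝ X]

theorem norm_smul_sub_le {t : ℝ} (ht₀ : 0 ≤ t) (ht₁ : t ≤ 1) (w y : X) :
    ‖t • w - y‖ ≤ t * ‖w - y‖ + (1 - t) * ‖y‖ :=
  calc ‖t • w - y‖ = ‖t • (w - y) - (1 - t) • y‖ := by congr 1; module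
    _ ≤ ‖t • (w - y)‖ + ‖(1 - t) • y‖ := norm_sub_le _ _
    _ = t * ‖w - y‖ + (1 - t) * ‖y‖ := by
      rw [norm_smul, norm_smul, Real.norm_of_nonneg ht₀, Real.norm_of_nonneg (by linarith)]

variable [Nontrivial X]

theorem two_mem_thinnessBounds : (2 : ℝ) ∈ thinnessBounds X := by
  obtain ⟨y, hy⟩ := exists_norm_eq X zero_le_one
  refine ⟨two_pos, fun n x hx ε hε => ⟨y, hy, fun i => ?_⟩⟩
  calc ‖x i - y‖ ≤ ‖x i‖ + ‖y‖ := norm_sub_le _ _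
    _ < 2 + ε := by rw [hx i, hy]; linarith

theorem one_le_of_mem_thinnessBounds {r : ℝ} (hr : r ∈ thinnessBounds X) : 1 ≤ r := by
  obtain ⟨u, hu⟩ := exists_norm_eq X zero_le_one
  refine le_of_forall_pos_lt_add fun ε hε => ?_
  obtain ⟨y, -, hy⟩ := hr.2 2 ![u, -u] (by simp [Fin.forall_fin_two, hu]) ε hε
  have h0 : ‖u - y‖ < r + ε := hy 0
  have h1 : ‖-u - y‖ < r + ε := hy 1
  have : (2 : ℝ) ≤ ‖u - y‖ + ‖-u - y‖ :=
    calc (2 : ℝ) = ‖(u - y) - (-u - y)‖ := by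
          rw [show (u - y) - (-u - y) = (2 : ℝ) • u by module, norm_smul, hu]; norm_num
      _ ≤ ‖u - y‖ + ‖-u - y‖ := norm_sub_le _ _
  linarith

theorem exists_norm_eq_one_and_eq_norm_smul (x : X) : ∃ w : X, ‖w‖ = 1 ∧ x = ‖x‖ • w := by
  rcases eq_or_ne x 0 with rfl | hx
  · obtain ⟨w, hw⟩ := exists_norm_eq X zero_le_one
    exact ⟨w, hw, by simp⟩
  · refine ⟨‖x‖⁻¹ • x, norm_smul_inv_norm hx, ?_⟩
    rw [smul_smul, mul_inv_cancel₀ (norm_ne_zero_iff.mpr hx), one_smul]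

theorem exists_norm_eq_one_norm_sub_lt_of_mem_thinnessBounds {r : ℝ}
    (hr : r ∈ thinnessBounds X) {n : ℕ} (x : Fin n → X) (hx : ∀ i, ‖x i‖ ≤ 1)
    {ε : ℝ} (hε : 0 < ε) : ∃ y : X, ‖y‖ = 1 ∧ ∀ i, ‖x i - y‖ < r + ε := by
  have h1r := one_le_of_mem_thinnessBounds hr
  choose w hw hxw using fun i => exists_norm_eq_one_and_eq_norm_smul (x i)
  obtain ⟨y, hy, hwy⟩ := hr.2 n w hw ε hε
  refine ⟨y, hy, fun i => ?_⟩
  have hle := norm_smul_sub_le (norm_nonneg (x i)) (hx i) (w i) y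
  rw [← hxw i, hy] at hle
  have := sub_nonneg.2 (hx i)
  calc ‖x i - y‖ ≤ ‖x i‖ * ‖w i - y‖ + (1 - ‖x i‖) * 1 := hle
    _ ≤ ‖x i‖ * max ‖w i - y‖ 1 + (1 - ‖x i‖) * max ‖w i - y‖ 1 := by
      gcongr
      exacts [le_max_left _ _, le_max_right _ _]
    _ = max ‖w i - y‖ 1 := by ring
    _ < r + ε := max_lt (hwy i) (by linarith)

end Bounds

section ProdLinfty

variable {X Y : Type*} [NormedAddCommGroup X] [NormedAddCommGroup Y]

theorem mem_thinnessBounds_prodLinfty_of_left [NormedSpace ℝ X] [Nontrivial X] {r : ℝ}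
    (hr : r ∈ thinnessBounds X) : r ∈ thinnessBounds (WithLp ⊤ (X × Y)) := by
  refine ⟨hr.1, fun n z hz ε hε => ?_⟩
  obtain ⟨u, hu, hzu⟩ := exists_norm_eq_one_norm_sub_lt_of_mem_thinnessBounds hr
    (fun i => (z i).fst) (fun i => hz i ▸ norm_fst_le X (z i)) hε
  refine ⟨toLp ⊤ (u, 0), by rw [norm_toLp_fst, hu], fun i => max_lt (hzu i) ?_⟩
  have := one_le_of_mem_thinnessBounds hr
  simpa using (hz i ▸ norm_snd_le X (z i)).trans_lt (by linarith)

theorem mem_thinnessBounds_prodLinfty_of_right [NormedSpace ℝ Y] [Nontrivial Y] {r : ℝ}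
    (hr : r ∈ thinnessBounds Y) : r ∈ thinnessBounds (WithLp ⊤ (X × Y)) := by
  refine ⟨hr.1, fun n z hz ε hε => ?_⟩
  obtain ⟨v, hv, hzv⟩ := exists_norm_eq_one_norm_sub_lt_of_mem_thinnessBounds hr
    (fun i => (z i).snd) (fun i => hz i ▸ norm_snd_le X (z i)) hε
  refine ⟨toLp ⊤ (0, v), by rw [norm_toLp_snd, hv], fun i => max_lt ?_ (hzv i)⟩
  have := one_le_of_mem_thinnessBounds hr
  simpa using (hz i ▸ norm_fst_le X (z i)).trans_lt (by linarith)

theorem mem_thinnessBounds_or_of_prodLinfty [NormedSpace ℝ X] [Nontrivial X]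
    [NormedSpace ℝ Y] [Nontrivial Y] {r : ℝ} (hr : r ∈ thinnessBounds (WithLp ⊤ (X × Y))) :
    r ∈ thinnessBounds X ∨ r ∈ thinnessBounds Y := by
  by_contra! ⟨hX, hY⟩
  obtain ⟨m, x, hx, εx, hεx, hfarX⟩ := (notMem_thinnessBounds_iff hr.1).1 hX
  obtain ⟨k, y, hy, εy, hεy, hfarY⟩ := (notMem_thinnessBounds_iff hr.1).1 hY
  obtain ⟨a, ha⟩ := exists_norm_eq X zero_le_one
  obtain ⟨b, hb⟩ := exists_norm_eq Y zero_le_one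
  set z := Fin.append (fun i => toLp ⊤ (x i, b)) (fun j => toLp ⊤ (a, y j))
  have hz : ∀ i, ‖z i‖ = 1 := Fin.addCases (by simp [z, Prod.norm_def, hx, hb])
    (by simp [z, Prod.norm_def, hy, ha])
  obtain ⟨w, hw, hzw⟩ := hr.2 _ z hz (min εx εy) (lt_min hεx hεy)
  rcases max_choice ‖w.fst‖ ‖w.snd‖ with hw₁ | hw₂
  · obtain ⟨i, hi⟩ := hfarX w.fst (hw₁ ▸ hw)
    have := (norm_fst_le X (z (Fin.castAdd k i) - w)).trans_lt (hzw _)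
    simp only [z, Fin.append_left, sub_fst, toLp_fst] at this
    linarith [min_le_left εx εy]
  · obtain ⟨j, hj⟩ := hfarY w.snd (hw₂ ▸ hw)
    have := (norm_snd_le X (z (Fin.natAdd m j) - w)).trans_lt (hzw _)
    simp only [z, Fin.append_right, sub_snd, toLp_snd] at this
    linarith [min_le_right εx εy]

theorem thinnessBounds_prodLinfty [NormedSpace ℝ X] [Nontrivial X]
    [NormedSpace ℝ Y] [Nontrivial Y] :
    thinnessBounds (WithLp ⊤ (X × Y)) = thinnessBounds X ∪ thinnessBounds Y :=
  Set.Subset.antisymm (fun _ => mem_thinnessBounds_or_of_prodLinfty)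
    (Set.union_subset (fun _ => mem_thinnessBounds_prodLinfty_of_left)
      (fun _ => mem_thinnessBounds_prodLinfty_of_right))

end ProdLinfty

theorem thinness_prodLinfty
    (X Y : Type*) [NormedAddCommGroup X] [NormedSpace ℝ X] [Nontrivial X]
    [NormedAddCommGroup Y] [NormedSpace ℝ Y] [Nontrivial Y] :
    thinness (WithLp ⊤ (X × Y)) = min (thinness X) (thinness Y) := by
  simp only [thinness_eq_sInf_thinnessBounds, thinnessBounds_prodLinfty]
  exact csInf_union bddBelow_thinnessBounds ⟨2, two_mem_thinnessBounds⟩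
    bddBelow_thinnessBounds ⟨2, two_mem_thinnessBounds⟩
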